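/- Let r₁, r₂, r₃ > 0 with r₁ ≠ r₂, and q₁, q₂, q₃ > 0. Consider the aligned configuration (α₁, α₂) = (π, π) (so α₃ = 0) of the orbitally constrained triple, with distances d₁ = r₂ + r₃, d₂ = r₃ + r₁, d₃ = |r₁ − r₂|. Set A₁ = r₁/(d₂³d₃³), A₂ = r₂/(d₃³d₁³), A₃ = r₃/(d₁³d₂³). Then the determinant of the Hessian of E at (π, π) equals q₁q₂q₃·r₁r₂r₃·(A₃q₃ − A₁q₁ − A₂q₂). Moreover, if A₃q₃ > A₁q₁ + A₂q₂ then (π, π) is a nondegenerate local minimum of E, and if A₃q₃ < A₁q₁ + A₂q₂ then (π, π) is a nondegenerate saddle point (neither a local minimum nor a local maximum). -/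

import Mathlib

/-- Distance between two points on concentric circles of radii `a`, `b` with central
angle `α` (cosine rule). -/
noncomputable def chordDist (a b α : ℝ) : ℝ :=
  Real.sqrt (a ^ 2 + b ^ 2 - 2 * a * b * Real.cos α)

/-- Coulomb energy of three charges on concentric circles of radii `r₁, r₂, r₃`, as a
function of the central angles `(α₁, α₂)` (with `α₃ = 2π − α₁ − α₂`). -/
noncomputable def orbitalEnergy (q1 q2 q3 r1 r2 r3 : ℝ) (p : ℝ × ℝ) : ℝ :=
  q2 * q3 / chordDist r2 r3 p.1 + q3 * q1 / chordDist r3 r1 p.2 +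
    q1 * q2 / chordDist r1 r2 (2 * Real.pi - p.1 - p.2)

/-!
Since `cos (2π - s) = cos s`, the energy is a sum of ridge functions
`f₁ α₁ + f₂ α₂ + f₃ (α₁ + α₂)` of the one-variable Coulomb terms `f α = q / chordDist a b α`.
Such a term is critical wherever `sin α = 0`, with second derivative `q a b / (a + b)³` at `π`
and `-q a b / |a - b|³` at `2π`. Hence the Hessian at `(π, π)` is the form
`a x² + b y² - c (x + y)²` with determinant `a b - c (a + b)`.
The second-order Taylor expansion with Peano remainder then decides the nature of the critical
point: a positive definite Hessian is coercive, giving a local minimum; in the indefinite case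
the form is negative in the direction `(b, a)` and positive in the direction `(1, -1)`.
-/

open Real Filter Topology Metric Asymptotics

section SecondOrder

variable {E F : Type*} [NormedAddCommGroup E] [NormedSpace ℝ E] [NormedAddCommGroup F]
  [NormedSpace ℝ F] {f : E → F} {f' : E → E →L[ℝ] F} {f'' : E →L[ℝ] E →L[ℝ] F} {x : E}

def HasFDerivTwiceAt (f : E → F) (f' : E → E →L[ℝ] F) (f'' : E →L[ℝ] E →L[ℝ] F) (x : E) : Prop :=
  (∀ᶠ y in 𝓝 x, HasFDerivAt f (f' y) y) ∧ HasFDerivAt f' f'' x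

namespace HasFDerivTwiceAt

theorem isLittleO_taylor (h : HasFDerivTwiceAt f f' f'' x) :
    (fun y => f y - f x - f' x (y - x) - (2 : ℝ)⁻¹ • f'' (y - x) (y - x)) =o[𝓝 x]
      fun y => ‖y - x‖ ^ 2 := by
  set g := fun y => f y - f x - f' x (y - x) - (2 : ℝ)⁻¹ • f'' (y - x) (y - x)
  -- By symmetry of `f''`, the remainder `g` has derivative `f' y - f' x - f'' (y - x)`, which is
  -- `o(‖y - x‖)`; the mean value inequality on `closedBall x ‖y - x‖` turns this into the bound.
  have hsymm := second_derivative_symmetric_of_eventually_of_real h.1 h.2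
  have hg : ∀ᶠ y in 𝓝 x, HasFDerivAt g (f' y - f' x - f'' (y - x)) y := by
    refine h.1.mono fun y hy => ?_
    have hsub : HasFDerivAt (fun z => z - x) (ContinuousLinearMap.id ℝ E) y :=
      (hasFDerivAt_id y).sub_const x
    have hquad := (f''.hasFDerivAt.comp y hsub).clm_apply hsub
    refine (((hy.sub_const (f x)).sub ((f' x).hasFDerivAt.comp y hsub)).sub
      (hquad.const_smul (2 : ℝ)⁻¹)).congr_fderiv ?_
    ext w
    simp only [ContinuousLinearMap.comp_id, Function.comp_apply, map_sub, smul_add, sub_apply,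
      add_apply, smul_apply, ContinuousLinearMap.flip_apply, hsymm w, sub_right_inj]
    module
  refine IsLittleO.of_bound fun ε hε => ?_
  obtain ⟨δ, hδ, hball⟩ := eventually_nhds_iff_ball.1 (hg.and (h.2.isLittleO.def hε))
  refine eventually_nhds_iff_ball.2 ⟨δ, hδ, fun y hy => ?_⟩
  have hseg : closedBall x ‖y - x‖ ⊆ ball x δ :=
    closedBall_subset_ball (by simpa [dist_eq_norm] using hy)
  have := (convex_closedBall x ‖y - x‖).norm_image_sub_le_of_norm_hasFDerivWithin_le
    (fun z hz => (hball z (hseg hz)).1.hasFDerivWithinAt)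
    (fun z hz => ((hball z (hseg hz)).2.trans
      (mul_le_mul_of_nonneg_left (mem_closedBall_iff_norm.1 hz) hε.le)))
    (mem_closedBall_self (norm_nonneg _)) (mem_closedBall_iff_norm.2 le_rfl)
  simpa [g, sq, mul_assoc] using this

theorem fderiv_fderiv (h : HasFDerivTwiceAt f f' f'' x) : fderiv ℝ (fderiv ℝ f) x = f'' :=
  (h.2.congr_of_eventuallyEq (h.1.mono fun _ hy => hy.fderiv)).fderiv

theorem add {g : E → F} {g' : E → E →L[ℝ] F} {g'' : E →L[ℝ] E →L[ℝ] F}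
    (hf : HasFDerivTwiceAt f f' f'' x) (hg : HasFDerivTwiceAt g g' g'' x) :
    HasFDerivTwiceAt (fun y => f y + g y) (fun y => f' y + g' y) (f'' + g'') x :=
  ⟨(hf.1.and hg.1).mono fun _ hy => hy.1.add hy.2, hf.2.add hg.2⟩

theorem neg (h : HasFDerivTwiceAt f f' f'' x) :
    HasFDerivTwiceAt (fun y => -f y) (fun y => -f' y) (-f'') x :=
  ⟨h.1.mono fun _ hy => hy.neg, h.2.neg⟩

end HasFDerivTwiceAt

theorem hasFDerivTwiceAt_comp_clm {φ φ' : ℝ → ℝ} {c : ℝ} (L : E →L[ℝ] ℝ)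
    (hφ : ∀ᶠ t in 𝓝 (L x), HasDerivAt φ (φ' t) t) (hφ' : HasDerivAt φ' c (L x)) :
    HasFDerivTwiceAt (fun y => φ (L y)) (fun y => φ' (L y) • L) ((c • L).smulRight L) x :=
  ⟨(L.continuous.tendsto x).eventually hφ |>.mono fun y hy => hy.comp_hasFDerivAt y L.hasFDerivAt,
    (hφ'.comp_hasFDerivAt x L.hasFDerivAt).smul_const L⟩

end SecondOrder

section SecondDerivativeTest

variable {E : Type*} [NormedAddCommGroup E] [NormedSpace ℝ E] {f : E → ℝ} {f' : E → E →L[ℝ] ℝ}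
  {f'' : E →L[ℝ] E →L[ℝ] ℝ} {x : E}

namespace HasFDerivTwiceAt

theorem isLocalMin {c : ℝ} (h : HasFDerivTwiceAt f f' f'' x) (hx : f' x = 0) (hc : 0 < c)
    (hf'' : ∀ v, c * ‖v‖ ^ 2 ≤ f'' v v) : IsLocalMin f x := by
  filter_upwards [h.isLittleO_taylor.def (half_pos hc)] with y hy
  have := hf'' (y - x)
  simp only [hx, zero_apply, sub_zero, smul_eq_mul, Real.norm_eq_abs,
    abs_pow, abs_norm] at hy
  linarith [neg_abs_le (f y - f x - 2⁻¹ * f'' (y - x) (y - x))]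

theorem not_isLocalMin (h : HasFDerivTwiceAt f f' f'' x) (hx : f' x = 0) {v : E}
    (hv : f'' v v < 0) : ¬ IsLocalMin f x := by
  intro hmin
  have hline : Tendsto (fun t : ℝ => x + t • v) (𝓝 0) (𝓝 x) :=
    (by fun_prop : Continuous fun t : ℝ => x + t • v).tendsto' 0 x (by simp)
  have hv0 : v ≠ 0 := by rintro rfl; simp at hv
  have hε : 0 < -f'' v v / (4 * ‖v‖ ^ 2) := by
    have := norm_pos_iff.2 hv0
    apply div_pos <;> [linarith; positivity]
  obtain ⟨t, ⟨ht, hle⟩, ht0⟩ := ((h.isLittleO_taylor.comp_tendsto hline).def hε).and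
    (hline.eventually hmin) |>.filter_mono nhdsWithin_le_nhds |>.and self_mem_nhdsWithin
    |>.exists (f := 𝓝[≠] (0 : ℝ))
  have ht2 : 0 < t ^ 2 := pow_pos (abs_pos.2 ht0) 2 |>.trans_eq (sq_abs t)
  simp only [Function.comp_apply, add_sub_cancel_left, hx, zero_apply, sub_zero, map_smul,
    smul_apply, smul_eq_mul, norm_smul, Real.norm_eq_abs, abs_mul, mul_pow, sq_abs,
    abs_sq] at ht
  have hbound : -f'' v v / (4 * ‖v‖ ^ 2) * (t ^ 2 * ‖v‖ ^ 2) = -f'' v v * t ^ 2 / 4 := by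
    field_simp [norm_ne_zero_iff.2 hv0]
  nlinarith [le_abs_self (f (x + t • v) - f x - 2⁻¹ * (t * (t * f'' v v))),
    mul_pos ht2 (neg_pos.2 hv)]

theorem not_isLocalMax (h : HasFDerivTwiceAt f f' f'' x) (hx : f' x = 0) {v : E}
    (hv : 0 < f'' v v) : ¬ IsLocalMax f x := fun hmax =>
  h.neg.not_isLocalMin (by simp [hx]) (v := v) (by simpa using hv) hmax.neg

end HasFDerivTwiceAt

end SecondDerivativeTest

section ChordDist

variable {a b α : ℝ}

theorem sq_chordDist (a b α : ℝ) : chordDist a b α ^ 2 = a ^ 2 + b ^ 2 - 2 * a * b * cos α :=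
  sq_sqrt (by nlinarith [sq_nonneg (a - b * cos α), sq_nonneg (b * sin α), sin_sq_add_cos_sq α])

theorem continuous_chordDist (a b : ℝ) : Continuous (chordDist a b) := by
  unfold chordDist; fun_prop

theorem chordDist_pi (a b : ℝ) : chordDist a b π = |a + b| := by
  rw [chordDist, cos_pi, ← sqrt_sq_eq_abs]; ring_nf

theorem chordDist_two_pi (a b : ℝ) : chordDist a b (2 * π) = |a - b| := by
  rw [chordDist, cos_two_pi, ← sqrt_sq_eq_abs]; ring_nf

theorem chordDist_two_pi_sub (a b α : ℝ) : chordDist a b (2 * π - α) = chordDist a b α := by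
  rw [chordDist, chordDist, cos_two_pi_sub]

theorem hasDerivAt_chordDist (h : chordDist a b α ≠ 0) :
    HasDerivAt (chordDist a b) (a * b * sin α / chordDist a b α) α := by
  have hu : a ^ 2 + b ^ 2 - 2 * a * b * cos α ≠ 0 := by
    rw [← sq_chordDist]; exact pow_ne_zero 2 h
  refine ((((hasDerivAt_cos α).const_mul (2 * a * b)).const_sub (a ^ 2 + b ^ 2)).sqrt
    hu).congr_deriv ?_
  rw [chordDist]; field_simp

theorem hasDerivAt_div_chordDist (q : ℝ) (h : chordDist a b α ≠ 0) :
    HasDerivAt (fun t => q / chordDist a b t) (-(q * a * b * sin α) / chordDist a b α ^ 3) α := by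
  refine ((hasDerivAt_const α q).div (hasDerivAt_chordDist h) h).congr_deriv ?_
  field_simp; ring

theorem hasDerivAt_deriv_div_chordDist (q : ℝ) (h : chordDist a b α ≠ 0) (hs : sin α = 0) :
    HasDerivAt (fun t => -(q * a * b * sin t) / chordDist a b t ^ 3)
      (-(q * a * b * cos α) / chordDist a b α ^ 3) α := by
  refine ((((hasDerivAt_sin α).const_mul (q * a * b)).neg).div
    ((hasDerivAt_chordDist h).pow 3) (pow_ne_zero 3 h)).congr_deriv ?_
  simp only [Pi.pow_apply, hs, mul_zero, zero_div, sub_zero]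
  field_simp

end ChordDist

section OrbitalEnergy

open ContinuousLinearMap

theorem hasFDerivTwiceAt_div_chordDist_comp {E : Type*} [NormedAddCommGroup E]
    [NormedSpace ℝ E] (q a b : ℝ) (L : E →L[ℝ] ℝ) {x : E} (h : chordDist a b (L x) ≠ 0)
    (hs : sin (L x) = 0) :
    HasFDerivTwiceAt (fun y => q / chordDist a b (L y))
      (fun y => (-(q * a * b * sin (L y)) / chordDist a b (L y) ^ 3) • L)
      (((-(q * a * b * cos (L x)) / chordDist a b (L x) ^ 3) • L).smulRight L) x :=
  hasFDerivTwiceAt_comp_clm L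
    (((continuous_chordDist a b).continuousAt.eventually_ne h).mono fun _ ht =>
      hasDerivAt_div_chordDist q ht)
    (hasDerivAt_deriv_div_chordDist q h hs)

theorem orbitalEnergy_eq (q1 q2 q3 r1 r2 r3 : ℝ) :
    orbitalEnergy q1 q2 q3 r1 r2 r3 = fun p => q2 * q3 / chordDist r2 r3 (fst ℝ ℝ ℝ p) +
      q3 * q1 / chordDist r3 r1 (snd ℝ ℝ ℝ p) +
      q1 * q2 / chordDist r1 r2 ((fst ℝ ℝ ℝ + snd ℝ ℝ ℝ) p) := by
  ext p
  rw [orbitalEnergy, sub_sub, chordDist_two_pi_sub]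
  rfl

theorem orbitalEnergy_hessian_at_pi_pi (q1 q2 q3 : ℝ) {r1 r2 r3 : ℝ} (hr1 : 0 < r1)
    (hr2 : 0 < r2) (hr3 : 0 < r3) (h12 : r1 ≠ r2) :
    ∃ E' H, HasFDerivTwiceAt (orbitalEnergy q1 q2 q3 r1 r2 r3) E' H (π, π) ∧ E' (π, π) = 0 ∧
      ∀ v w : ℝ × ℝ, H v w = q2 * q3 * r2 * r3 / (r2 + r3) ^ 3 * v.1 * w.1 +
        q3 * q1 * r3 * r1 / (r3 + r1) ^ 3 * v.2 * w.2 -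
        q1 * q2 * r1 * r2 / |r1 - r2| ^ 3 * (v.1 + v.2) * (w.1 + w.2) := by
  have h1 := hasFDerivTwiceAt_div_chordDist_comp (q2 * q3) r2 r3 (fst ℝ ℝ ℝ) (x := (π, π))
    (by rw [coe_fst', chordDist_pi]; positivity) (by simp)
  have h2 := hasFDerivTwiceAt_div_chordDist_comp (q3 * q1) r3 r1 (snd ℝ ℝ ℝ) (x := (π, π))
    (by rw [coe_snd', chordDist_pi]; positivity) (by simp)
  have hpi : (fst ℝ ℝ ℝ + snd ℝ ℝ ℝ) (π, π) = 2 * π := by rw [two_mul]; rfl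
  have h3 := hasFDerivTwiceAt_div_chordDist_comp (q1 * q2) r1 r2 (fst ℝ ℝ ℝ + snd ℝ ℝ ℝ)
    (x := (π, π)) (by rw [hpi, chordDist_two_pi]; positivity) (by rw [hpi, sin_two_pi])
  rw [orbitalEnergy_eq]
  refine ⟨_, _, (h1.add h2).add h3, by simp [hpi], fun v w => ?_⟩
  simp only [add_apply, smulRight_apply, smul_apply, smul_eq_mul, coe_fst', coe_snd', hpi, cos_pi,
    cos_two_pi, chordDist_pi, chordDist_two_pi, abs_of_pos (add_pos hr2 hr3),
    abs_of_pos (add_pos hr3 hr1)]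
  ring

end OrbitalEnergy

theorem exists_pos_mul_sq_norm_le {a b c : ℝ} (hca : c < a) (hdet : c * (a + b) < a * b) :
    ∃ m > 0, ∀ v : ℝ × ℝ, m * ‖v‖ ^ 2 ≤ a * v.1 ^ 2 + b * v.2 ^ 2 - c * (v.1 + v.2) ^ 2 := by
  have hcb : c < b := by nlinarith [sq_nonneg c]
  have htr : 0 < (a - c) + (b - c) := by linarith
  refine ⟨(a * b - c * (a + b)) / ((a - c) + (b - c)), div_pos (by linarith) htr, fun v => ?_⟩
  have hnorm : ‖v‖ ^ 2 ≤ v.1 ^ 2 + v.2 ^ 2 := by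
    rw [Prod.norm_def, Real.norm_eq_abs, Real.norm_eq_abs]
    rcases max_cases |v.1| |v.2| with ⟨h, -⟩ | ⟨h, -⟩ <;> rw [h, sq_abs] <;>
      linarith [sq_nonneg v.1, sq_nonneg v.2]
  rw [div_mul_eq_mul_div, div_le_iff₀ htr]
  -- trace × form − det × (v.1² + v.2²) is a sum of two squares
  nlinarith [sq_nonneg ((a - c) * v.1 - c * v.2), sq_nonneg ((b - c) * v.2 - c * v.1),
    mul_le_mul_of_nonneg_left hnorm (sub_nonneg.2 hdet.le)]

/-- At the aligned configuration `(α₁, α₂) = (π, π)` (so `α₃ = 0`), with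
`d₁ = r₂+r₃`, `d₂ = r₃+r₁`, `d₃ = |r₁−r₂|` and `A₁ = r₁/(d₂³d₃³)`, `A₂ = r₂/(d₃³d₁³)`,
`A₃ = r₃/(d₁³d₂³)`, the Hessian determinant equals
`q₁q₂q₃·r₁r₂r₃·(A₃q₃ − A₁q₁ − A₂q₂)`; if `A₃q₃ > A₁q₁ + A₂q₂` the point is a
nondegenerate local minimum, and if `A₃q₃ < A₁q₁ + A₂q₂` it is a nondegenerate saddle
(neither a local minimum nor a local maximum). -/
theorem orbital_pitchfork_at_pi_pi
    (r1 r2 r3 q1 q2 q3 : ℝ)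
    (hr1 : 0 < r1) (hr2 : 0 < r2) (hr3 : 0 < r3) (h12 : r1 ≠ r2)
    (hq1 : 0 < q1) (hq2 : 0 < q2) (hq3 : 0 < q3)
    (d1 d2 d3 A1 A2 A3 : ℝ)
    (hd1 : d1 = r2 + r3) (hd2 : d2 = r3 + r1) (hd3 : d3 = |r1 - r2|)
    (hA1 : A1 = r1 / (d2 ^ 3 * d3 ^ 3)) (hA2 : A2 = r2 / (d3 ^ 3 * d1 ^ 3))
    (hA3 : A3 = r3 / (d1 ^ 3 * d2 ^ 3))
    (B : (ℝ × ℝ) →L[ℝ] (ℝ × ℝ) →L[ℝ] ℝ)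
    (hB : B = fderiv ℝ (fderiv ℝ (orbitalEnergy q1 q2 q3 r1 r2 r3))
        (Real.pi, Real.pi)) :
    (B (1, 0) (1, 0) * B (0, 1) (0, 1) - B (1, 0) (0, 1) * B (0, 1) (1, 0) =
      q1 * q2 * q3 * (r1 * r2 * r3) * (A3 * q3 - A1 * q1 - A2 * q2)) ∧
    (A1 * q1 + A2 * q2 < A3 * q3 →
      IsLocalMin (orbitalEnergy q1 q2 q3 r1 r2 r3) (Real.pi, Real.pi) ∧
      B (1, 0) (1, 0) * B (0, 1) (0, 1) - B (1, 0) (0, 1) * B (0, 1) (1, 0) ≠ 0) ∧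
    (A3 * q3 < A1 * q1 + A2 * q2 →
      ¬ IsLocalMin (orbitalEnergy q1 q2 q3 r1 r2 r3) (Real.pi, Real.pi) ∧
      ¬ IsLocalMax (orbitalEnergy q1 q2 q3 r1 r2 r3) (Real.pi, Real.pi) ∧
      B (1, 0) (1, 0) * B (0, 1) (0, 1) - B (1, 0) (0, 1) * B (0, 1) (1, 0) ≠ 0) := by
  obtain ⟨E', H, hE, hcrit, hH⟩ := orbitalEnergy_hessian_at_pi_pi q1 q2 q3 hr1 hr2 hr3 h12
  rw [hE.fderiv_fderiv] at hB
  subst hB hd1 hd2 hd3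
  set a := q2 * q3 * r2 * r3 / (r2 + r3) ^ 3
  set b := q3 * q1 * r3 * r1 / (r3 + r1) ^ 3
  set c := q1 * q2 * r1 * r2 / |r1 - r2| ^ 3
  have h12' : 0 < |r1 - r2| := abs_pos.2 (sub_ne_zero.2 h12)
  have ha : 0 < a := by positivity
  have hb : 0 < b := by positivity
  have hc : 0 < c := by positivity
  have hK : 0 < q1 * q2 * q3 * (r1 * r2 * r3) := by positivity
  have hdet : B (1, 0) (1, 0) * B (0, 1) (0, 1) - B (1, 0) (0, 1) * B (0, 1) (1, 0) =
      a * b - c * (a + b) := by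
    simp only [hH]; ring
  have hdet_eq : a * b - c * (a + b) =
      q1 * q2 * q3 * (r1 * r2 * r3) * (A3 * q3 - A1 * q1 - A2 * q2) := by
    simp only [a, b, c, hA1, hA2, hA3]
    field_simp
    ring
  refine ⟨hdet.trans hdet_eq, fun hlt => ?_, fun hgt => ?_⟩
  · have hpos : c * (a + b) < a * b := by nlinarith [mul_pos hK (sub_pos.2 hlt)]
    obtain ⟨m, hm, hcoer⟩ := exists_pos_mul_sq_norm_le (by nlinarith) hpos
    refine ⟨hE.isLocalMin hcrit hm fun v => ?_, by linarith⟩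
    rw [hH]; linarith [hcoer v]
  · have hneg : a * b < c * (a + b) := by nlinarith [mul_pos hK (sub_pos.2 hgt)]
    refine ⟨hE.not_isLocalMin hcrit (v := (b, a)) ?_, hE.not_isLocalMax hcrit (v := (1, -1)) ?_,
      by linarith⟩
    · rw [hH]; nlinarith
    · rw [hH]; linarith
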